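/- Let $k$ be a field, $A = k[s,t]/(st)$ graded with $|s|=1$, $|t|=-1$. For $0 \le m \le \infty$ and $I \subseteq \{1,\dots,m\}$, let $M(m,I)$ be the graded $A$-module with basis $x_0,\dots,x_m$ ($|x_i| = i$), where $s x_{i-1} = x_i$ if $i \in I$ and $0$ otherwise, and $t x_i = x_{i-1}$ if $i \notin I$ and $0$ otherwise. Then for any injective graded $A$-module map $j\colon M(m,I) \hookrightarrow M$, $j$ is a pure injection if and only if $m = \infty$ or $j(x_m) \notin t M_{m+1}$. -/

import Mathlib

open scoped Classical

namespace Paper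

variable (k : Type) [Field k]

/-- A nonnegatively graded module over `A = k[s,t]/(st)`, given componentwise. -/
structure GM where
  M : ℕ → Type
  [acg : ∀ i, AddCommGroup (M i)]
  [mod : ∀ i, Module k (M i)]
  s : ∀ i, M i →ₗ[k] M (i + 1)
  t : ∀ i, M (i + 1) →ₗ[k] M i
  ts : ∀ i x, t i (s i x) = 0
  st : ∀ i x, s i (t i x) = 0

attribute [instance] GM.acg GM.mod

variable {k}

/-- Morphisms of graded `A`-modules. -/
structure Hom (M N : GM k) where
  f : ∀ i, M.M i →ₗ[k] N.M i
  comm_s : ∀ i x, f (i + 1) (M.s i x) = N.s i (f i x)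
  comm_t : ∀ i x, f i (M.t i x) = N.t i (f (i + 1) x)

/-- Isomorphism of graded `A`-modules. -/
def GMIso (M N : GM k) : Prop := ∃ f : Hom M N, ∀ i, Function.Bijective (f.f i)

/-- A morphism is (componentwise) injective. -/
def InjHom {M N : GM k} (f : Hom M N) : Prop := ∀ i, Function.Injective (f.f i)

/-- Purity of (the image of) a morphism, via the concrete characterization
`sN_i ⊓ P_{i+1} = sP_i` and `tN_{i+1} ⊓ P_i = tP_{i+1}`. -/
def IsPure {M N : GM k} (f : Hom M N) : Prop :=
  ∀ i,
    LinearMap.range (N.s i) ⊓ LinearMap.range (f.f (i + 1)) =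
      LinearMap.range ((N.s i).comp (f.f i)) ∧
    LinearMap.range (N.t i) ⊓ LinearMap.range (f.f i) =
      LinearMap.range ((N.t i).comp (f.f (i + 1)))

/-- Index `(m, I)` of a string module: `0 ≤ m ≤ ∞` and `I ⊆ {1, …, m}`. -/
structure StringIndex where
  m : ℕ∞
  I : Set ℕ
  hI : ∀ i ∈ I, 1 ≤ i ∧ (i : ℕ∞) ≤ m

variable (k)

/-- Degree-`i` component of the `n`-fold suspension of the string module `M(m,I)`:
a copy of `k` if `n ≤ i ≤ n + m`, and `0` otherwise. -/
def SC (n : ℕ) (σ : StringIndex) (i : ℕ) : Submodule k k :=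
  if n ≤ i ∧ (i : ℕ∞) ≤ (n : ℕ∞) + σ.m then ⊤ else ⊥

lemma SC_top (n : ℕ) (σ : StringIndex) (i : ℕ) (h1 : n ≤ i)
    (h2 : (i : ℕ∞) ≤ (n : ℕ∞) + σ.m) : SC k n σ i = ⊤ := by
  simp [SC, h1, h2]

/-- The `s`-multiplication on the suspended string module. -/
noncomputable def smap (n : ℕ) (σ : StringIndex) (i : ℕ) :
    SC k n σ i →ₗ[k] SC k n σ (i + 1) :=
  if h : ((i + 1 : ℕ) : ℕ∞) ≤ (n : ℕ∞) + σ.m ∧ (i + 1 - n) ∈ σ.I then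
    Submodule.inclusion (by
      have h1 : 1 ≤ i + 1 - n := (σ.hI _ h.2).1
      have hn : n ≤ i + 1 := by omega
      rw [SC_top k n σ (i + 1) hn h.1]
      exact le_top)
  else 0

/-- The `t`-multiplication on the suspended string module. -/
noncomputable def tmap (n : ℕ) (σ : StringIndex) (i : ℕ) :
    SC k n σ (i + 1) →ₗ[k] SC k n σ i :=
  if h : n ≤ i ∧ (i + 1 - n) ∉ σ.I then
    Submodule.inclusion (by
      by_cases hc : n ≤ i + 1 ∧ ((i + 1 : ℕ) : ℕ∞) ≤ (n : ℕ∞) + σ.m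
      · have hi : (i : ℕ∞) ≤ (n : ℕ∞) + σ.m :=
          le_trans (by exact_mod_cast Nat.le_succ i) hc.2
        rw [SC_top k n σ i h.1 hi]
        exact le_top
      · have hcc : ¬(((i + 1 : ℕ) : ℕ∞) ≤ (n : ℕ∞) + σ.m) :=
          fun hh => hc ⟨by omega, hh⟩
        have : SC k n σ (i + 1) = ⊥ := by
          rw [SC, if_neg (fun hh => hcc hh.2)]
        rw [this]; exact bot_le)
  else 0

/-- The `n`-fold suspension `Σⁿ M(m, I)` of the string module `M(m, I)`. -/
noncomputable def SM (n : ℕ) (σ : StringIndex) : GM k where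
  M i := SC k n σ i
  s i := smap k n σ i
  t i := tmap k n σ i
  ts i x := by
    by_cases h : ((i + 1 : ℕ) : ℕ∞) ≤ (n : ℕ∞) + σ.m ∧ (i + 1 - n) ∈ σ.I
    · have h' : ¬(n ≤ i ∧ (i + 1 - n) ∉ σ.I) := fun hc => hc.2 h.2
      simp only [tmap, dif_neg h', LinearMap.zero_apply]
    · simp only [smap, dif_neg h, LinearMap.zero_apply, map_zero]
  st i x := by
    by_cases h : n ≤ i ∧ (i + 1 - n) ∉ σ.I
    · have h' : ¬(((i + 1 : ℕ) : ℕ∞) ≤ (n : ℕ∞) + σ.m ∧ (i + 1 - n) ∈ σ.I) :=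
        fun hc => h.2 hc.2
      simp only [smap, dif_neg h', LinearMap.zero_apply]
    · simp only [tmap, dif_neg h, LinearMap.zero_apply, map_zero]

/-- The defining generator `x_i` of the (suspended) string module. -/
def xg (n : ℕ) (σ : StringIndex) (i : ℕ) (h1 : n ≤ i)
    (h2 : (i : ℕ∞) ≤ (n : ℕ∞) + σ.m) : SC k n σ i :=
  ⟨1, by rw [SC_top k n σ i h1 h2]; trivial⟩

variable {k}

/-- A graded module is nontrivial. -/
def Nontriv (M : GM k) : Prop := ∃ i, ∃ x : M.M i, x ≠ 0

/-- Binary direct sum of graded `A`-modules. -/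
def dsum (M N : GM k) : GM k where
  M i := M.M i × N.M i
  s i := (M.s i).prodMap (N.s i)
  t i := (M.t i).prodMap (N.t i)
  ts i x := by cases x with | mk a b => simp [M.ts, N.ts, Prod.ext_iff]
  st i x := by cases x with | mk a b => simp [M.st, N.st, Prod.ext_iff]

/-- Indecomposability of a graded `A`-module. -/
def Indec (M : GM k) : Prop :=
  Nontriv M ∧ ∀ N P : GM k, GMIso M (dsum N P) → ¬(Nontriv N ∧ Nontriv P)

/-- Direct sum of a family of graded `A`-modules. -/
noncomputable def gdsum {ι : Type} (F : ι → GM k) : GM k where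
  M i := Π₀ j : ι, (F j).M i
  s i := DFinsupp.mapRange.linearMap (fun j => (F j).s i)
  t i := DFinsupp.mapRange.linearMap (fun j => (F j).t i)
  ts i x := by
    ext j
    simp [(F j).ts]
  st i x := by
    ext j
    simp [(F j).st]

/-- The (lexicographic-type) well-order on string indices: `t` before `s`. -/
def idxLE (σ τ : StringIndex) : Prop :=
  (σ.m ≤ τ.m ∧ τ.I ∩ {j | (j : ℕ∞) ≤ σ.m} = σ.I) ∨
  (∃ i ∈ τ.I, i ∉ σ.I ∧ σ.I ∩ {j | j < i} = τ.I ∩ {j | j < i})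

end Paper

namespace Paper

section Aux

variable {k : Type} [Field k]

lemma sc_zero (σ : StringIndex) (i : ℕ) (h2 : ¬ ((i : ℕ∞) ≤ σ.m))
    (x : SC k 0 σ i) : x = 0 := by
  have hS : SC k 0 σ i = ⊥ := by
    simp only [SC]
    rw [if_neg (fun hc => h2 (by simpa using hc.2))]
  have hx : (x : k) ∈ (⊥ : Submodule k k) := hS.le x.2
  exact Subtype.ext ((Submodule.mem_bot k).mp hx)

lemma sc_eq_smul (σ : StringIndex) (i : ℕ) (h2 : (i : ℕ∞) ≤ σ.m) (x : SC k 0 σ i) :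
    x = x.1 • xg k 0 σ i (Nat.zero_le i) (by simpa using h2) := by
  apply Subtype.ext
  simp [xg]

lemma smul_xg_eq_zero {σ : StringIndex} {i : ℕ} {c : k} {h1 : 0 ≤ i}
    {h2 : (i : ℕ∞) ≤ ((0 : ℕ) : ℕ∞) + σ.m}
    (h : c • xg k 0 σ i h1 h2 = 0) : c = 0 := by
  have := congrArg Subtype.val h
  simpa [xg] using this

lemma smap_xg (σ : StringIndex) (i : ℕ) (h2 : ((i + 1 : ℕ) : ℕ∞) ≤ σ.m)
    (hI : i + 1 ∈ σ.I) (h1' : 0 ≤ i) (h2' : (i : ℕ∞) ≤ ((0 : ℕ) : ℕ∞) + σ.m)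
    (h1'' : 0 ≤ i + 1) (h2'' : ((i + 1 : ℕ) : ℕ∞) ≤ ((0 : ℕ) : ℕ∞) + σ.m) :
    smap k 0 σ i (xg k 0 σ i h1' h2') = xg k 0 σ (i + 1) h1'' h2'' := by
  have hcond : ((i + 1 : ℕ) : ℕ∞) ≤ ((0 : ℕ) : ℕ∞) + σ.m ∧ (i + 1 - 0) ∈ σ.I :=
    ⟨by simpa using h2, by simpa using hI⟩
  rw [smap, dif_pos hcond]
  apply Subtype.ext
  rfl

lemma tmap_xg (σ : StringIndex) (i : ℕ) (hI : i + 1 ∉ σ.I)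
    (h1' : 0 ≤ i + 1) (h2' : ((i + 1 : ℕ) : ℕ∞) ≤ ((0 : ℕ) : ℕ∞) + σ.m)
    (h1'' : 0 ≤ i) (h2'' : (i : ℕ∞) ≤ ((0 : ℕ) : ℕ∞) + σ.m) :
    tmap k 0 σ i (xg k 0 σ (i + 1) h1' h2') = xg k 0 σ i h1'' h2'' := by
  have hcond : 0 ≤ i ∧ (i + 1 - 0) ∉ σ.I := ⟨Nat.zero_le i, by simpa using hI⟩
  rw [tmap, dif_pos hcond]
  apply Subtype.ext
  rfl

end Aux

/-- a monomorphism from the string module `M(m,I)` is pure iff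
`m = ∞` or `j(x_m) ∉ t M_{m+1}`. -/
theorem purity_characterization_of_string_submodule
    (k : Type) [Field k] (σ : StringIndex) (M : GM k)
    (j : Hom (SM k 0 σ) M) (hinj : InjHom j) :
    IsPure j ↔
      (σ.m = ⊤ ∨
        ∀ (n : ℕ) (h : σ.m = (n : ℕ∞)),
          j.f n (xg k 0 σ n (Nat.zero_le n) (by simp [h])) ∉
            Set.range (M.t n)) := by
  constructor
  · intro hp
    by_cases hm : σ.m = ⊤
    · exact Or.inl hm
    refine Or.inr fun n h hmem => ?_
    obtain ⟨z, hz⟩ := hmem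
    have hx : j.f n (xg k 0 σ n (Nat.zero_le n) (by simp [h])) ∈
        LinearMap.range (M.t n) ⊓ LinearMap.range (j.f n) :=
      ⟨⟨z, hz⟩, ⟨_, rfl⟩⟩
    rw [(hp n).2] at hx
    obtain ⟨w, hw⟩ := hx
    have hw0 : w = 0 := by
      refine sc_zero σ (n + 1) ?_ w
      rw [h]
      intro hcon
      exact Nat.not_succ_le_self n (by exact_mod_cast hcon)
    rw [hw0] at hw
    simp only [map_zero] at hw
    have h0 : j.f n (xg k 0 σ n (Nat.zero_le n) (by simp [h])) = j.f n 0 := by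
      simp [← hw]
    have hxg0 := hinj n h0
    have := congrArg Subtype.val hxg0
    simp [xg] at this
    exact one_ne_zero this
  · intro hc i
    constructor
    · -- s condition
      refine le_antisymm ?_ ?_
      · rintro y ⟨hys, hyf⟩
        obtain ⟨x, rfl⟩ := hyf
        by_cases h1 : ((i + 1 : ℕ) : ℕ∞) ≤ σ.m
        · have hi : (i : ℕ∞) ≤ σ.m :=
            le_trans (by exact_mod_cast Nat.le_succ i) h1
          have hx := sc_eq_smul σ (i + 1) h1 x
          by_cases hI : i + 1 ∈ σ.I
          · refine ⟨x.1 • xg k 0 σ i (Nat.zero_le i) (by simpa using hi), ?_⟩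
            have hstep : (SM k 0 σ).s i (x.1 • xg k 0 σ i (Nat.zero_le i) (by simpa using hi))
                = x := by
              show smap k 0 σ i _ = x
              rw [map_smul,
                smap_xg σ i h1 hI _ (by simpa using hi) (Nat.zero_le _) (by simpa using h1),
                ← hx]
            exact (j.comm_s i _).symm.trans (congrArg (j.f (i + 1)) hstep)
          · -- y is killed by t, so the coefficient vanishes
            obtain ⟨z, hz⟩ := hys
            have hty : M.t i (j.f (i + 1) x) = 0 := by rw [← hz, M.ts]
            have hjt : j.f i ((SM k 0 σ).t i x) = 0 := by
              rw [j.comm_t i x, hty]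
            have hxt : (SM k 0 σ).t i x = 0 := by
              apply hinj i
              simpa using hjt
            have hxeq : (SM k 0 σ).t i x
                = x.1 • xg k 0 σ i (Nat.zero_le i) (by simpa using hi) := by
              show tmap k 0 σ i x = _
              conv_lhs => rw [hx]
              rw [map_smul, tmap_xg σ i hI]
            rw [hxeq] at hxt
            have hc0 : x.1 = 0 := smul_xg_eq_zero hxt
            have hx0 : x = 0 := by rw [hx, hc0, zero_smul]; rfl
            rw [hx0, map_zero]
            exact Submodule.zero_mem _
        · have hx0 : x = 0 := sc_zero σ (i + 1) h1 x
          rw [hx0, map_zero]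
          exact Submodule.zero_mem _
      · rintro y ⟨x, rfl⟩
        refine ⟨⟨j.f i x, by simp⟩, ⟨(SM k 0 σ).s i x, ?_⟩⟩
        simpa using j.comm_s i x
    · -- t condition
      refine le_antisymm ?_ ?_
      · rintro y ⟨hyt, hyf⟩
        obtain ⟨x, rfl⟩ := hyf
        by_cases hi : (i : ℕ∞) ≤ σ.m
        · have hx := sc_eq_smul σ i hi x
          by_cases h1 : ((i + 1 : ℕ) : ℕ∞) ≤ σ.m
          · by_cases hI : i + 1 ∈ σ.I
            · -- y is killed by s, so the coefficient vanishes
              obtain ⟨z, hz⟩ := hyt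
              have hsy : M.s i (j.f i x) = 0 := by rw [← hz, M.st]
              have hjs : j.f (i + 1) ((SM k 0 σ).s i x) = 0 := by
                rw [j.comm_s i x, hsy]
              have hxs : (SM k 0 σ).s i x = 0 := by
                apply hinj (i + 1)
                simpa using hjs
              have hxeq : (SM k 0 σ).s i x
                  = x.1 • xg k 0 σ (i + 1) (Nat.zero_le _) (by simpa using h1) := by
                show smap k 0 σ i x = _
                conv_lhs => rw [hx]
                rw [map_smul, smap_xg σ i h1 hI]
              rw [hxeq] at hxs
              have hc0 : x.1 = 0 := smul_xg_eq_zero hxs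
              have hx0 : x = 0 := by rw [hx, hc0, zero_smul]; rfl
              rw [hx0, map_zero]
              exact Submodule.zero_mem _
            · refine ⟨x.1 • xg k 0 σ (i + 1) (Nat.zero_le _) (by simpa using h1), ?_⟩
              show M.t i (j.f (i + 1) _) = _
              rw [show ∀ y : SC k 0 σ (i + 1), j.f (i + 1) (x.1 • y : SC k 0 σ (i + 1)) = x.1 • j.f (i + 1) y from
                fun y => map_smul (j.f (i + 1)) _ y, map_smul]
              rw [← (show ∀ y : SC k 0 σ (i + 1), j.f i ((SM k 0 σ).t i y) = M.t i (j.f (i + 1) y) from j.comm_t i)]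
              rw [show (SM k 0 σ).t i (xg k 0 σ (i + 1) (Nat.zero_le _) (by simpa using h1))
                    = xg k 0 σ i (Nat.zero_le i) (by simpa using hi) from
                  tmap_xg σ i hI _ _ _ _]
              rw [← (show ∀ y : SC k 0 σ i, j.f i (x.1 • y : SC k 0 σ i) = x.1 • j.f i y from
                fun y => map_smul (j.f i) _ y), ← hx]
          · -- boundary: σ.m = i
            have hne : σ.m ≠ ⊤ := fun hh => h1 (hh ▸ le_top)
            rcases hc with hc | hc
            · exact absurd hc hne
            have hn : ((σ.m.toNat : ℕ) : ℕ∞) = σ.m := ENat.coe_toNat hne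
            set n := σ.m.toNat with hndef
            have hni : n = i := by
              have hle0 : (i : ℕ∞) ≤ (n : ℕ∞) := by rw [hn]; exact hi
              have hle : i ≤ n := by exact_mod_cast hle0
              have hlt : ¬ (i + 1 ≤ n) := fun hcon => by
                apply h1
                rw [← hn]
                exact_mod_cast hcon
              omega
            have hmi : σ.m = (i : ℕ∞) := by rw [← hni]; exact hn.symm
            have hkey := hc i hmi
            by_cases hc0 : x.1 = 0
            · have hx0 : x = 0 := by rw [hx, hc0, zero_smul]; rfl
              rw [hx0, map_zero]
              exact Submodule.zero_mem _
            · exfalso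
              apply hkey
              obtain ⟨z, hz⟩ := hyt
              refine ⟨(x.1)⁻¹ • z, ?_⟩
              have hjx : j.f i x
                  = x.1 • j.f i (xg k 0 σ i (Nat.zero_le i) (by simp [hmi])) := by
                conv_lhs => rw [hx]
                exact map_smul (j.f i) _ _
              rw [map_smul, hz, hjx, inv_smul_smul₀ hc0]
        · have hx0 : x = 0 := sc_zero σ i hi x
          rw [hx0, map_zero]
          exact Submodule.zero_mem _
      · rintro y ⟨x, rfl⟩
        refine ⟨⟨j.f (i + 1) x, by simp⟩, ⟨(SM k 0 σ).t i x, ?_⟩⟩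
        simpa using j.comm_t i x

end Paper
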